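/- Smoothed value function error bound: for every λ > 0 and every t ∈ ℝ, −1/(4λ) ≤ F(t) − F_λ(t) ≤ 0. -/

import Mathlib

open scoped BigOperators

/-- `f_k(Ω) = −(1/α)·|∑_n h_n e^{iΩ_n}|²`. -/
noncomputable def fObj {N : ℕ} (α : ℝ) (h : Fin N → ℂ) (Ω : Fin N → ℝ) : ℝ :=
  -(1 / α) * ‖∑ n, h n * Complex.exp (Complex.I * (Ω n : ℂ))‖ ^ 2

/-- `g_q(Ω) = |∑_n c_n e^{iΩ_n}|²`. -/
noncomputable def gObj {N : ℕ} (c : Fin N → ℂ) (Ω : Fin N → ℝ) : ℝ :=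
  ‖∑ n, c n * Complex.exp (Complex.I * (Ω n : ℂ))‖ ^ 2

/-- The unit simplex in Euclidean space `ℝ^m`. -/
def unitSimplex (m : ℕ) : Set (EuclideanSpace ℝ (Fin m)) :=
  {x | (∀ i, 0 ≤ x i) ∧ ∑ i, x i = 1}

/-- The compensated-convexity upper transform of the maximum function:
`C_λ(y) = λ‖y‖² − dist(2λy, Δ)²/(4λ) + 1/(4λ)`. -/
noncomputable def Cupper {m : ℕ} (lam : ℝ) (y : EuclideanSpace ℝ (Fin m)) : ℝ :=
  lam * ‖y‖ ^ 2 - (Metric.infDist ((2 * lam) • y) (unitSimplex m)) ^ 2 / (4 * lam) + 1 / (4 * lam)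

/-- `h(Ω,t) = (f_1(Ω)−t,…,f_K(Ω)−t, g_1(Ω)−σ_1,…,g_Q(Ω)−σ_Q) ∈ ℝ^{K+Q}`. -/
noncomputable def hVec {N K Q : ℕ} (h : Fin K → Fin N → ℂ) (α : Fin K → ℝ)
    (c : Fin Q → Fin N → ℂ) (σ : Fin Q → ℝ) (Ω : Fin N → ℝ) (t : ℝ) :
    EuclideanSpace ℝ (Fin (K + Q)) :=
  WithLp.toLp 2 (fun i : Fin (K + Q) => (Fin.addCases (fun k => fObj (α k) (h k) Ω - t) (fun q => gObj (c q) Ω - σ q) i : ℝ))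

/-- `F(t) = inf_Ω max( max_k (f_k(Ω) − t), max_q (g_q(Ω) − σ_q) )`. -/
noncomputable def Ffun {N K Q : ℕ} (h : Fin K → Fin N → ℂ) (α : Fin K → ℝ)
    (c : Fin Q → Fin N → ℂ) (σ : Fin Q → ℝ) (t : ℝ) : ℝ :=
  ⨅ Ω : Fin N → ℝ, max (⨆ k, (fObj (α k) (h k) Ω - t)) (⨆ q, (gObj (c q) Ω - σ q))

/-- `F_λ(t) = inf_Ω C_λ(h(Ω,t))`. -/
noncomputable def Flam {N K Q : ℕ} (h : Fin K → Fin N → ℂ) (α : Fin K → ℝ)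
    (c : Fin Q → Fin N → ℂ) (σ : Fin Q → ℝ) (lam t : ℝ) : ℝ :=
  ⨅ Ω : Fin N → ℝ, Cupper lam (hVec h α c σ Ω t)

/-!
Expanding the square, `λ‖y‖² - dist(2λy, x)²/(4λ) = ⟪y, x⟫ - ‖x‖²/(4λ)`, so
`C_λ(y) = sup_{x ∈ Δ} (⟪y, x⟫ - ‖x‖²/(4λ)) + 1/(4λ)`. A vertex `x = eᵢ` gives `C_λ(y) ≥ yᵢ`, while
`⟪y, x⟫ ≤ maxᵢ yᵢ` on `Δ` and `‖x‖² ≥ 0` give `C_λ(y) ≤ maxᵢ yᵢ + 1/(4λ)`. Since `maxᵢ h(Ω, t)ᵢ` is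
the objective defining `F(t)`, taking the infimum over `Ω` yields the error bound.
-/

open Metric

lemma le_infDist_sq_of_forall_le_dist_sq {α : Type*} [PseudoMetricSpace α] {s : Set α} {x : α}
    {c : ℝ} (hs : s.Nonempty) (h : ∀ y ∈ s, c ≤ dist x y ^ 2) : c ≤ infDist x s ^ 2 := by
  rw [← Real.sqrt_le_left infDist_nonneg]
  refine le_of_not_gt fun hlt => ?_
  obtain ⟨y, hy, hxy⟩ := (infDist_lt_iff hs).1 hlt
  linarith [(Real.lt_sqrt dist_nonneg).1 hxy, h y hy]

lemma mul_norm_sq_sub_dist_smul_sq_div {E : Type*} [NormedAddCommGroup E]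
    [InnerProductSpace ℝ E] {lam : ℝ} (hlam : lam ≠ 0) (y x : E) :
    lam * ‖y‖ ^ 2 - dist ((2 * lam) • y) x ^ 2 / (4 * lam) =
      inner ℝ y x - ‖x‖ ^ 2 / (4 * lam) := by
  rw [dist_eq_norm, norm_sub_sq_real, real_inner_smul_left, norm_smul, Real.norm_eq_abs, mul_pow,
    sq_abs]
  field_simp
  ring

lemma single_mem_unitSimplex {m : ℕ} (i : Fin m) :
    EuclideanSpace.single i (1 : ℝ) ∈ unitSimplex m := by
  refine ⟨fun j => ?_, ?_⟩
  · rw [PiLp.single_apply]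
    positivity
  · simp [PiLp.single_apply]

lemma apply_le_Cupper {m : ℕ} {lam : ℝ} (hlam : 0 < lam) (y : EuclideanSpace ℝ (Fin m))
    (i : Fin m) : y i ≤ Cupper lam y := by
  have hdist := infDist_le_dist_of_mem (x := (2 * lam) • y) (single_mem_unitSimplex i)
  have hsq := pow_le_pow_left₀ infDist_nonneg hdist 2
  have hexpand := mul_norm_sq_sub_dist_smul_sq_div hlam.ne' y (EuclideanSpace.single i 1)
  rw [EuclideanSpace.inner_single_right, PiLp.norm_single, norm_one, one_mul, conj_trivial,
    one_pow] at hexpand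
  have := div_le_div_of_nonneg_right hsq (by positivity : (0 : ℝ) ≤ 4 * lam)
  rw [Cupper]
  linarith

lemma iSup_apply_le_Cupper {m : ℕ} (hm : 0 < m) {lam : ℝ} (hlam : 0 < lam)
    (y : EuclideanSpace ℝ (Fin m)) : ⨆ i, y i ≤ Cupper lam y :=
  haveI := Fin.pos_iff_nonempty.1 hm
  ciSup_le (apply_le_Cupper hlam y)

lemma Cupper_le_iSup_apply_add {m : ℕ} (hm : 0 < m) {lam : ℝ} (hlam : 0 < lam)
    (y : EuclideanSpace ℝ (Fin m)) : Cupper lam y ≤ (⨆ i, y i) + 1 / (4 * lam) := by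
  set M := ⨆ i, y i
  have hinner : ∀ x ∈ unitSimplex m, inner ℝ y x ≤ M := fun x ⟨hx0, hx1⟩ =>
    calc inner ℝ y x = ∑ j, x j * y j := by simp [PiLp.inner_apply]
      _ ≤ ∑ j, x j * M := Finset.sum_le_sum fun j _ =>
        mul_le_mul_of_nonneg_left (le_ciSup (Finite.bddAbove_range _) j) (hx0 j)
      _ = M := by rw [← Finset.sum_mul, hx1, one_mul]
  have h4 : 0 < 4 * lam := by positivity
  have hdist :
      lam * ‖y‖ ^ 2 - M ≤ infDist ((2 * lam) • y) (unitSimplex m) ^ 2 / (4 * lam) := by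
    refine (le_div_iff₀' h4).2 <| le_infDist_sq_of_forall_le_dist_sq
      ⟨_, single_mem_unitSimplex ⟨0, hm⟩⟩ fun x hx => (le_div_iff₀' h4).1 ?_
    have hexpand := mul_norm_sq_sub_dist_smul_sq_div hlam.ne' y x
    have hpen : 0 ≤ ‖x‖ ^ 2 / (4 * lam) := by positivity
    linarith [hinner x hx]
  rw [Cupper]
  linarith

section hVec

variable {N K Q : ℕ} (h : Fin K → Fin N → ℂ) (α : Fin K → ℝ) (c : Fin Q → Fin N → ℂ)
  (σ : Fin Q → ℝ) (Ω : Fin N → ℝ) (t : ℝ)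

lemma hVec_castAdd (k : Fin K) : hVec h α c σ Ω t (Fin.castAdd Q k) = fObj (α k) (h k) Ω - t := by
  simp only [hVec, WithLp.ofLp_toLp, Fin.addCases_left]

lemma hVec_natAdd (q : Fin Q) : hVec h α c σ Ω t (Fin.natAdd K q) = gObj (c q) Ω - σ q := by
  simp only [hVec, WithLp.ofLp_toLp, Fin.addCases_right]

lemma iSup_hVec (hK : 0 < K) (hQ : 0 < Q) :
    ⨆ i, hVec h α c σ Ω t i = max (⨆ k, (fObj (α k) (h k) Ω - t)) (⨆ q, (gObj (c q) Ω - σ q)) := by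
  have := Fin.pos_iff_nonempty.1 hK
  have := Fin.pos_iff_nonempty.1 hQ
  have : Nonempty (Fin (K + Q)) := ⟨Fin.castAdd Q ⟨0, hK⟩⟩
  have hf := Finite.bddAbove_range fun k => fObj (α k) (h k) Ω - t
  have hg := Finite.bddAbove_range fun q => gObj (c q) Ω - σ q
  have hbdd := Finite.bddAbove_range (hVec h α c σ Ω t)
  apply le_antisymm
  · refine ciSup_le fun i => Fin.addCases (fun k => ?_) (fun q => ?_) i
    · exact hVec_castAdd h α c σ Ω t k ▸ le_max_of_le_left (le_ciSup hf k)
    · exact hVec_natAdd h α c σ Ω t q ▸ le_max_of_le_right (le_ciSup hg q)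
  · refine max_le (ciSup_le fun k => ?_) (ciSup_le fun q => ?_)
    · exact hVec_castAdd h α c σ Ω t k ▸ le_ciSup hbdd (Fin.castAdd Q k)
    · exact hVec_natAdd h α c σ Ω t q ▸ le_ciSup hbdd (Fin.natAdd K q)

end hVec

lemma ciInf_le_ciInf_and_ciInf_le_ciInf_add {ι : Type*} [Nonempty ι] {f g : ι → ℝ} {ε : ℝ}
    (hf : BddBelow (Set.range f)) (hfg : ∀ i, f i ≤ g i) (hgf : ∀ i, g i ≤ f i + ε) :
    ⨅ i, f i ≤ ⨅ i, g i ∧ ⨅ i, g i ≤ (⨅ i, f i) + ε := by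
  obtain ⟨b, hb⟩ := hf
  have hg : BddBelow (Set.range g) :=
    ⟨b, Set.forall_mem_range.2 fun i => (hb ⟨i, rfl⟩).trans (hfg i)⟩
  refine ⟨ciInf_mono ⟨b, hb⟩ hfg, ?_⟩
  exact sub_le_iff_le_add.1 <|
    le_ciInf fun i => sub_le_iff_le_add.2 ((ciInf_le hg i).trans (hgf i))

theorem stmt9_general {N K Q : ℕ} (hK : 0 < K) (hQ : 0 < Q)
    (h : Fin K → Fin N → ℂ) (α : Fin K → ℝ)
    (c : Fin Q → Fin N → ℂ) (σ : Fin Q → ℝ) (lam : ℝ) (hlam : 0 < lam) (t : ℝ) :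
    -(1 / (4 * lam)) ≤ Ffun h α c σ t - Flam h α c σ lam t ∧
      Ffun h α c σ t - Flam h α c σ lam t ≤ 0 := by
  have hm : 0 < K + Q := by omega
  have hF : Ffun h α c σ t = ⨅ Ω, ⨆ i, hVec h α c σ Ω t i := by
    simp only [Ffun, iSup_hVec h α c σ _ t hK hQ]
  have hbdd : BddBelow (Set.range fun Ω => ⨆ i, hVec h α c σ Ω t i) := by
    refine ⟨-σ ⟨0, hQ⟩, Set.forall_mem_range.2 fun Ω => ?_⟩
    have hg : 0 ≤ gObj (c ⟨0, hQ⟩) Ω := by unfold gObj; positivity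
    linarith [hVec_natAdd h α c σ Ω t ⟨0, hQ⟩,
      le_ciSup (Finite.bddAbove_range (hVec h α c σ Ω t)) (Fin.natAdd K ⟨0, hQ⟩)]
  obtain ⟨hle, hge⟩ := ciInf_le_ciInf_and_ciInf_le_ciInf_add hbdd
    (fun Ω => iSup_apply_le_Cupper hm hlam _) (fun Ω => Cupper_le_iSup_apply_add hm hlam _)
  rw [hF, Flam]
  constructor <;> linarith

/-- Smoothed value function error bound: `−1/(4λ) ≤ F(t) − F_λ(t) ≤ 0`. -/
theorem stmt9 {N K Q : ℕ} (hN : 0 < N) (hK : 0 < K) (hQ : 0 < Q)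
    (h : Fin K → Fin N → ℂ) (α : Fin K → ℝ) (hα : ∀ k, 0 < α k)
    (c : Fin Q → Fin N → ℂ) (σ : Fin Q → ℝ) (lam : ℝ) (hlam : 0 < lam) (t : ℝ) :
    -(1 / (4 * lam)) ≤ Ffun h α c σ t - Flam h α c σ lam t ∧
      Ffun h α c σ t - Flam h α c σ lam t ≤ 0 :=
  stmt9_general hK hQ h α c σ lam hlam t
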